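/- Let G > H > K be finite groups with the normal closure of K in G contained in H, and let A, B, C be the respective group algebras over a commutative ring k. Then the tower A/B/C is right depth three: A ⊗_B A ∼ A as (A, C)-bimodules. -/

import Mathlib

open scoped TensorProduct

noncomputable section

section Bimod

variable (L R : Type) [Ring L] [Ring R]

def BDiv {M N : Type} [AddCommGroup M] [AddCommGroup N]
    (lM : L → M → M) (rM : M → R → M) (lN : L → N → N) (rN : N → R → N) : Prop :=
  ∃ (n : ℕ) (f : M →+ (Fin n → N)) (g : (Fin n → N) →+ M),
    (∀ (l : L) (m : M), f (lM l m) = fun i => lN l (f m i)) ∧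
    (∀ (m : M) (r : R), f (rM m r) = fun i => rN (f m i) r) ∧
    (∀ (l : L) (v : Fin n → N), g (fun i => lN l (v i)) = lM l (g v)) ∧
    (∀ (v : Fin n → N) (r : R), g (fun i => rN (v i) r) = rM (g v) r) ∧
    ∀ m : M, g (f m) = m

def BSim {M N : Type} [AddCommGroup M] [AddCommGroup N]
    (lM : L → M → M) (rM : M → R → M) (lN : L → N → N) (rN : N → R → N) : Prop :=
  BDiv L R lM rM lN rN ∧ BDiv L R lN rN lM rM

end Bimod

section Ext

variable {R S : Type} [Ring R] [Ring S] (ψ : R →+* S)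

def rdualSub : AddSubgroup (S →+ R) where
  carrier := {h | ∀ (x : S) (r : R), h (x * ψ r) = h x * r}
  add_mem' := by
    intro a b ha hb
    intro x r
    simp only [AddMonoidHom.add_apply, ha x r, hb x r, add_mul]
  zero_mem' := by intro x r; simp
  neg_mem' := by
    intro a ha x r
    simp only [AddMonoidHom.neg_apply, ha x r, neg_mul]

def ldualSub : AddSubgroup (S →+ R) where
  carrier := {h | ∀ (r : R) (x : S), h (ψ r * x) = r * h x}
  add_mem' := by
    intro a b ha hb r x
    simp only [AddMonoidHom.add_apply, ha r x, hb r x, mul_add]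
  zero_mem' := by intro r x; simp
  neg_mem' := by
    intro a ha r x
    simp only [AddMonoidHom.neg_apply, ha r x, mul_neg]

def rdualL (r : R) (h : rdualSub ψ) : rdualSub ψ :=
  ⟨(AddMonoidHom.mulLeft r).comp h.1, by
    intro x r'
    simp only [AddMonoidHom.coe_comp, Function.comp_apply, AddMonoidHom.coe_mulLeft,
      h.2 x r', mul_assoc]⟩

def rdualR (h : rdualSub ψ) (s : S) : rdualSub ψ :=
  ⟨h.1.comp (AddMonoidHom.mulLeft s), by
    intro x r'
    simp only [AddMonoidHom.coe_comp, Function.comp_apply, AddMonoidHom.coe_mulLeft,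
      ← mul_assoc]
    exact h.2 (s * x) r'⟩

def ldualL (s : S) (h : ldualSub ψ) : ldualSub ψ :=
  ⟨h.1.comp (AddMonoidHom.mulRight s), by
    intro r x
    simp only [AddMonoidHom.coe_comp, Function.comp_apply, AddMonoidHom.coe_mulRight,
      mul_assoc]
    exact h.2 r (x * s)⟩

def ldualR (h : ldualSub ψ) (r : R) : ldualSub ψ :=
  ⟨(AddMonoidHom.mulRight r).comp h.1, by
    intro r' x
    simp only [AddMonoidHom.coe_comp, Function.comp_apply, AddMonoidHom.coe_mulRight,
      h.2 r' x, mul_assoc]⟩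

def tensorRel : AddSubgroup (S ⊗[ℤ] S) :=
  AddSubgroup.closure {z | ∃ (x y : S) (r : R),
    z = (x * ψ r) ⊗ₜ[ℤ] y - x ⊗ₜ[ℤ] (ψ r * y)}

def TensorSq := (S ⊗[ℤ] S) ⧸ tensorRel ψ

instance : AddCommGroup (TensorSq ψ) := QuotientAddGroup.Quotient.addCommGroup _

def tmk (x y : S) : TensorSq ψ := QuotientAddGroup.mk (x ⊗ₜ[ℤ] y)

def tL (a : S) : TensorSq ψ →+ TensorSq ψ :=
  QuotientAddGroup.map _ _
    ((TensorProduct.map (AddMonoidHom.mulLeft a).toIntLinearMap LinearMap.id).toAddMonoidHom)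
    (by
      show tensorRel ψ ≤ AddSubgroup.comap _ (tensorRel ψ)
      rw [tensorRel, AddSubgroup.closure_le]
      rintro z ⟨x, y, r, rfl⟩
      simp only [SetLike.mem_coe, AddSubgroup.mem_comap, LinearMap.toAddMonoidHom_coe,
        map_sub, TensorProduct.map_tmul, AddMonoidHom.coe_toIntLinearMap,
        AddMonoidHom.coe_mulLeft, LinearMap.id_coe, id_eq]
      exact AddSubgroup.subset_closure ⟨a * x, y, r, by rw [mul_assoc]⟩)

def tR (a : S) : TensorSq ψ →+ TensorSq ψ :=
  QuotientAddGroup.map _ _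
    ((TensorProduct.map LinearMap.id (AddMonoidHom.mulRight a).toIntLinearMap).toAddMonoidHom)
    (by
      show tensorRel ψ ≤ AddSubgroup.comap _ (tensorRel ψ)
      rw [tensorRel, AddSubgroup.closure_le]
      rintro z ⟨x, y, r, rfl⟩
      simp only [SetLike.mem_coe, AddSubgroup.mem_comap, LinearMap.toAddMonoidHom_coe,
        map_sub, TensorProduct.map_tmul, AddMonoidHom.coe_toIntLinearMap,
        AddMonoidHom.coe_mulRight, LinearMap.id_coe, id_eq]
      exact AddSubgroup.subset_closure ⟨x, y * a, r, by rw [mul_assoc]⟩)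

/-- The multiplication map `S ⊗_R S → S`, `x ⊗ y ↦ x * y`. -/
def tmul' : TensorSq ψ →+ S :=
  QuotientAddGroup.lift _ (LinearMap.mul' ℤ S).toAddMonoidHom
    (by
      intro z hz
      induction hz using AddSubgroup.closure_induction with
      | mem z hz =>
        obtain ⟨x, y, r, rfl⟩ := hz
        simp [mul_assoc]
      | zero => simp
      | add a b _ _ ha hb =>
        simp only [AddMonoidHom.mem_ker, LinearMap.toAddMonoidHom_coe] at ha hb ⊢
        simp [map_add, ha, hb]
      | neg a _ ha =>
        simp only [AddMonoidHom.mem_ker, LinearMap.toAddMonoidHom_coe] at ha ⊢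
        simp [ha])

end Ext


section ExtEnd

variable {R S : Type} [Ring R] [Ring S] (ψ : R →+* S)

/-- `End(S_R)`: additive endomorphisms of `S` commuting with the right `R`-action
(along `ψ`), as a subring of `AddMonoid.End S`. -/
def endR : Subring (AddMonoid.End S) where
  carrier := {e | ∀ (x : S) (r : R), e (x * ψ r) = e x * ψ r}
  mul_mem' := by
    intro a b ha hb x r
    show a (b (x * ψ r)) = a (b x) * ψ r
    rw [hb, ha]
  one_mem' := by intro x r; rfl
  add_mem' := by
    intro a b ha hb x r
    show a (x * ψ r) + b (x * ψ r) = (a x + b x) * ψ r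
    rw [ha, hb, add_mul]
  zero_mem' := by
    intro x r
    show (0 : S) = 0 * ψ r
    rw [zero_mul]
  neg_mem' := by
    intro a ha x r
    show -(a (x * ψ r)) = -(a x) * ψ r
    rw [ha, neg_mul]

/-- `End(_RS)`: additive endomorphisms of `S` commuting with the left `R`-action
(along `ψ`), as a subring of `AddMonoid.End S`. -/
def endL : Subring (AddMonoid.End S) where
  carrier := {e | ∀ (r : R) (x : S), e (ψ r * x) = ψ r * e x}
  mul_mem' := by
    intro a b ha hb r x
    show a (b (ψ r * x)) = ψ r * a (b x)
    rw [hb, ha]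
  one_mem' := by intro r x; rfl
  add_mem' := by
    intro a b ha hb r x
    show a (ψ r * x) + b (ψ r * x) = ψ r * (a x + b x)
    rw [ha, hb, mul_add]
  zero_mem' := by
    intro r x
    show (0 : S) = ψ r * 0
    rw [mul_zero]
  neg_mem' := by
    intro a ha r x
    show -(a (ψ r * x)) = ψ r * -(a x)
    rw [ha, mul_neg]

/-- The left regular representation `λ : S → End(S_R)`, `s ↦ (x ↦ s * x)`. -/
def lam : S →+* endR ψ where
  toFun s := ⟨(AddMonoidHom.mulLeft s : S →+ S), by
    intro x r
    show s * (x * ψ r) = s * x * ψ r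
    rw [mul_assoc]⟩
  map_one' := by
    apply Subtype.ext
    refine AddMonoidHom.ext fun x => ?_
    show (1 : S) * x = x
    rw [one_mul]
  map_mul' s t := by
    apply Subtype.ext
    refine AddMonoidHom.ext fun x => ?_
    show (s * t) * x = s * (t * x)
    rw [mul_assoc]
  map_zero' := by
    apply Subtype.ext
    refine AddMonoidHom.ext fun x => ?_
    show (0 : S) * x = 0
    rw [zero_mul]
  map_add' s t := by
    apply Subtype.ext
    refine AddMonoidHom.ext fun x => ?_
    show (s + t) * x = s * x + t * x
    rw [add_mul]

/-- Right multiplication `ρ : S → End(_RS)`, `s ↦ (x ↦ x * s)`. -/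
def rho (s : S) : endL ψ :=
  ⟨(AddMonoidHom.mulRight s : S →+ S), by
    intro r x
    show (ψ r * x) * s = ψ r * (x * s)
    rw [mul_assoc]⟩

/-- Left `S`-action on `End(_RS)`: `(x · f)(z) = f (z * x)`. -/
def endLL (x : S) (f : endL ψ) : endL ψ :=
  ⟨(f.1 : S →+ S).comp (AddMonoidHom.mulRight x), by
    intro r z
    show (f.1 : S →+ S) ((ψ r * z) * x) = ψ r * (f.1 : S →+ S) (z * x)
    rw [mul_assoc]
    exact f.2 r (z * x)⟩

/-- Right `S`-action on `End(_RS)`: `(f · y)(z) = f z * y`. -/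
def endLR (f : endL ψ) (y : S) : endL ψ :=
  ⟨(AddMonoidHom.mulRight y).comp (f.1 : S →+ S), by
    intro r z
    show (f.1 : S →+ S) (ψ r * z) * y = ψ r * ((f.1 : S →+ S) z * y)
    rw [f.2 r z, mul_assoc]⟩

end ExtEnd

/-!
Write `A = k[G]`, `B = k[H]`, `C = k[K]`. Since `C ⊆ B`, the map `x ↦ x ⊗ 1` is an
`(A, C)`-bimodule embedding `A → A ⊗_B A`, split by multiplication.

Conversely, as a left `B`-module `A = ⊕ B g_q` over representatives `g_q` of the right cosets
`q = H g_q`; with `π_q` the projection onto the `q`-summand, `x ⊗ y ↦ (x π_q(y))_q` embeds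
`A ⊗_B A` into `A^(H\G)`, split by `(v_q) ↦ ∑ v_q g_q⁻¹ ⊗ g_q`. The hypothesis `K^G ≤ H` is
what makes both maps right `C`-linear: `g κ = (g κ g⁻¹) g` with `g κ g⁻¹ ∈ H`, so right
multiplication by `κ ∈ K` preserves every right coset of `H`, and `g_q c g_q⁻¹ ∈ B` for `c ∈ C`.
-/

theorem BDiv.of_fintype {L R M N ι : Type} [Ring L] [Ring R] [AddCommGroup M] [AddCommGroup N]
    [Fintype ι] {lM : L → M → M} {rM : M → R → M} {lN : L → N → N} {rN : N → R → N}
    (f : M →+ (ι → N)) (g : (ι → N) →+ M)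
    (hf_left : ∀ l m, f (lM l m) = fun i => lN l (f m i))
    (hf_right : ∀ m r, f (rM m r) = fun i => rN (f m i) r)
    (hg_left : ∀ l v, g (fun i => lN l (v i)) = lM l (g v))
    (hg_right : ∀ v r, g (fun i => rN (v i) r) = rM (g v) r)
    (hgf : ∀ m, g (f m) = m) :
    BDiv L R lM rM lN rN := by
  let e := Fintype.equivFin ι
  refine ⟨Fintype.card ι,
    (AddMonoidHom.pi fun j => Pi.evalAddMonoidHom _ (e.symm j)).comp f,
    g.comp (AddMonoidHom.pi fun i => Pi.evalAddMonoidHom _ (e i)), ?_, ?_, ?_, ?_, ?_⟩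
  · intro l m; funext j; simp [hf_left]
  · intro m r; funext j; simp [hf_right]
  · intro l v; exact hg_left l (fun i => v (e i))
  · intro v r; exact hg_right (fun i => v (e i)) r
  · intro m
    show g (fun i => f m (e.symm (e i))) = m
    simp only [Equiv.symm_apply_apply, hgf]

namespace TensorSq

variable {R S : Type} [Ring R] [Ring S] {ψ : R →+* S}

@[elab_as_elim]
theorem induction_on {p : TensorSq ψ → Prop} (t : TensorSq ψ) (zero : p 0)
    (mk : ∀ x y, p (tmk ψ x y)) (add : ∀ a b, p a → p b → p (a + b)) : p t := by
  obtain ⟨z, rfl⟩ := QuotientAddGroup.mk_surjective t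
  induction z using TensorProduct.induction_on with
  | zero => exact zero
  | tmul x y => exact mk x y
  | add a b ha hb => exact add _ _ ha hb

theorem tmk_add_left (x x' y : S) : tmk ψ (x + x') y = tmk ψ x y + tmk ψ x' y := by
  simp only [tmk, TensorProduct.add_tmul, QuotientAddGroup.mk_add]; rfl

theorem tmk_sum_right {ι : Type} (s : Finset ι) (x : S) (v : ι → S) :
    tmk ψ x (∑ i ∈ s, v i) = ∑ i ∈ s, tmk ψ x (v i) := by
  simp only [tmk, TensorProduct.tmul_sum, QuotientAddGroup.mk_sum]; rfl

theorem tmk_balanced (x y : S) (r : R) : tmk ψ (x * ψ r) y = tmk ψ x (ψ r * y) :=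
  QuotientAddGroup.eq_iff_sub_mem.mpr (AddSubgroup.subset_closure ⟨x, y, r, rfl⟩)

theorem tL_tmk (a x y : S) : tL ψ a (tmk ψ x y) = tmk ψ (a * x) y :=
  rfl

theorem tR_tmk (a x y : S) : tR ψ a (tmk ψ x y) = tmk ψ x (y * a) :=
  rfl

def mulMap (π : S →+ S) (hπ : ∀ r y, π (ψ r * y) = ψ r * π y) : TensorSq ψ →+ S :=
  QuotientAddGroup.lift _
    ((LinearMap.mul' ℤ S).comp (TensorProduct.map LinearMap.id π.toIntLinearMap)).toAddMonoidHom
    (by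
      rw [tensorRel, AddSubgroup.closure_le]
      rintro _ ⟨x, y, r, rfl⟩
      simp [hπ, mul_assoc])

variable {π : S →+ S} {hπ : ∀ r y, π (ψ r * y) = ψ r * π y}

@[simp]
theorem mulMap_tmk (x y : S) : mulMap π hπ (tmk ψ x y) = x * π y :=
  rfl

theorem mulMap_tL (a : S) (t : TensorSq ψ) : mulMap π hπ (tL ψ a t) = a * mulMap π hπ t := by
  induction t using induction_on with
  | zero => simp
  | mk x y => simp [tL_tmk, mul_assoc]
  | add u v hu hv => simp only [map_add, hu, hv, mul_add]

theorem mulMap_tR {a : S} (ha : ∀ y, π (y * a) = π y * a) (t : TensorSq ψ) :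
    mulMap π hπ (tR ψ a t) = mulMap π hπ t * a := by
  induction t using induction_on with
  | zero => simp
  | mk x y => simp [tR_tmk, ha, mul_assoc]
  | add u v hu hv => simp only [map_add, hu, hv, add_mul]

end TensorSq

section TowerDivisibility

open TensorSq

variable {R S T : Type} [Ring R] [Ring S] [Ring T] (ψ : R →+* S) (φ : T →+* S)

theorem bDiv_self_tensorSq (hφ : ∀ c, ∃ r, φ c = ψ r) :
    BDiv S T (· * ·) (fun x c => x * φ c) (fun a t => tL ψ a t) (fun t c => tR ψ (φ c) t) := by
  refine BDiv.of_fintype (ι := Unit)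
    (AddMonoidHom.mk' (fun x _ => tmk ψ x 1) fun x x' => funext fun _ => tmk_add_left x x' 1)
    ((mulMap (AddMonoidHom.id S) fun _ _ => rfl).comp (Pi.evalAddMonoidHom _ ()))
    (fun a x => funext fun _ => (tL_tmk a x 1).symm) (fun x c => funext fun _ => ?_)
    (fun a v => mulMap_tL (hπ := fun _ _ => rfl) a (v ()))
    (fun v c => mulMap_tR (hπ := fun _ _ => rfl) (fun _ => rfl) (v ()))
    (fun x => by simp)
  obtain ⟨r, hr⟩ := hφ c
  simp only [AddMonoidHom.mk'_apply, tR_tmk, hr, tmk_balanced, mul_one, one_mul]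

/-- The embedding is `x ⊗ y ↦ (x * π i y)ᵢ`, split by `(vᵢ) ↦ ∑ᵢ vᵢ (u i)⁻¹ ⊗ u i`. -/
theorem bDiv_tensorSq_pi {ι : Type} [Fintype ι] (u : ι → Sˣ) (π : ι → S →+ S)
    (hπ_left : ∀ i r y, π i (ψ r * y) = ψ r * π i y)
    (hπ_right : ∀ i y c, π i (y * φ c) = π i y * φ c)
    (hπ_sum : ∀ y, ∑ i, π i y = y)
    (hπ_mem : ∀ i y, ∃ r, π i y = ψ r * u i)
    (hu_conj : ∀ i c, ∃ r, u i * φ c = ψ r * u i) :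
    BDiv S T (fun a t => tL ψ a t) (fun t c => tR ψ (φ c) t) (· * ·) (fun x c => x * φ c) := by
  let g : (ι → S) →+ TensorSq ψ := AddMonoidHom.mk'
    (fun v => ∑ i, tmk ψ (v i * ↑(u i)⁻¹) (u i))
    (fun v w => by simp only [Pi.add_apply, add_mul, tmk_add_left, Finset.sum_add_distrib])
  refine BDiv.of_fintype (AddMonoidHom.pi fun i => mulMap (π i) (hπ_left i)) g
    (fun a t => funext fun i => mulMap_tL (hπ := hπ_left i) a t)
    (fun t c => funext fun i => mulMap_tR (hπ := hπ_left i) (hπ_right i · c) t)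
    (fun a v => ?_) (fun v c => ?_) (fun t => ?_)
  · simp only [g, AddMonoidHom.mk'_apply, map_sum, tL_tmk, mul_assoc]
  · simp only [g, AddMonoidHom.mk'_apply, map_sum, tR_tmk]
    refine Finset.sum_congr rfl fun i _ => ?_
    obtain ⟨r, hr⟩ := hu_conj i c
    have hr' : φ c * ↑(u i)⁻¹ = ↑(u i)⁻¹ * ψ r := by
      rw [Units.eq_inv_mul_iff_mul_eq, ← mul_assoc, hr, mul_assoc, Units.mul_inv, mul_one]
    rw [mul_assoc, hr', ← mul_assoc, tmk_balanced, hr]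
  · induction t using induction_on with
    | zero => simp
    | add t t' ht ht' => rw [map_add, map_add, ht, ht']
    | mk x y =>
      have hpiece : ∀ i, tmk ψ (x * π i y * ↑(u i)⁻¹) (u i) = tmk ψ x (π i y) := fun i => by
        obtain ⟨r, hr⟩ := hπ_mem i y
        rw [hr, mul_assoc, mul_assoc, Units.mul_inv, mul_one, ← tmk_balanced]
      simp only [g, AddMonoidHom.mk'_apply, AddMonoidHom.pi_apply, mulMap_tmk, hpiece,
        ← tmk_sum_right, hπ_sum]

end TowerDivisibility

section GroupAlgebra

open MonoidAlgebra

variable {k : Type} [Semiring k] {G : Type} [Group G]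

open Classical in
def cosetProj (H : Subgroup G) (q : Quotient (QuotientGroup.rightRel H)) :
    MonoidAlgebra k G →+ MonoidAlgebra k G :=
  coeffAddEquiv.symm.toAddMonoidHom.comp
    ((Finsupp.filterAddHom fun g => Quotient.mk _ g = q).comp coeffAddEquiv.toAddMonoidHom)

variable {H K : Subgroup G}

theorem conj_mem_of_normalClosure_le (hK : Subgroup.normalClosure (K : Set G) ≤ H) (g : G)
    {κ : G} (hκ : κ ∈ K) : g * κ * g⁻¹ ∈ H :=
  hK (Subgroup.normalClosure_normal.conj_mem _ (Subgroup.subset_normalClosure hκ) g)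

theorem exists_mapDomainRingHom_subtype_eq (hKH : K ≤ H) (c : MonoidAlgebra k K) :
    ∃ b, mapDomainRingHom k K.subtype c = mapDomainRingHom k H.subtype b :=
  ⟨mapDomainRingHom k (Subgroup.inclusion hKH) c, by
    rw [← Subgroup.subtype_comp_inclusion hKH, mapDomainRingHom_comp, RingHom.comp_apply]⟩

theorem exists_of_mul_eq_mul_of (hK : Subgroup.normalClosure (K : Set G) ≤ H) (g : G)
    (c : MonoidAlgebra k K) :
    ∃ b, of k G g * mapDomainRingHom k K.subtype c = mapDomainRingHom k H.subtype b * of k G g := by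
  induction c using induction_linear with
  | zero => exact ⟨0, by simp⟩
  | add c c' hc hc' =>
    obtain ⟨b, hb⟩ := hc
    obtain ⟨b', hb'⟩ := hc'
    exact ⟨b + b', by rw [map_add, mul_add, hb, hb', map_add, add_mul]⟩
  | single κ a =>
    refine ⟨single ⟨g * κ * g⁻¹, conj_mem_of_normalClosure_le hK g κ.2⟩ a, ?_⟩
    simp [mapDomainRingHom_apply, mapDomain_single, of_apply, single_mul_single, mul_assoc]

open Classical in
theorem cosetProj_single (q : Quotient (QuotientGroup.rightRel H)) (g : G) (a : k) :
    cosetProj H q (single g a) = if Quotient.mk _ g = q then single g a else 0 := by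
  split_ifs with h
  · exact congrArg ofCoeff (Finsupp.filter_single_of_pos _ h)
  · exact congrArg ofCoeff (Finsupp.filter_single_of_neg _ h)

theorem cosetProj_single_mul {q : Quotient (QuotientGroup.rightRel H)} {x : G}
    (hx : ∀ g, Quotient.mk (QuotientGroup.rightRel H) (x * g) = Quotient.mk _ g)
    (a : k) (y : MonoidAlgebra k G) :
    cosetProj H q (single x a * y) = single x a * cosetProj H q y := by
  induction y using induction_linear with
  | zero => simp
  | add y y' hy hy' => simp only [mul_add, map_add, hy, hy']
  | single g b =>
    rw [single_mul_single, cosetProj_single, cosetProj_single, hx]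
    split_ifs <;> simp

theorem cosetProj_mul_single {q : Quotient (QuotientGroup.rightRel H)} {x : G}
    (hx : ∀ g, Quotient.mk (QuotientGroup.rightRel H) (g * x) = Quotient.mk _ g)
    (y : MonoidAlgebra k G) (a : k) :
    cosetProj H q (y * single x a) = cosetProj H q y * single x a := by
  induction y using induction_linear with
  | zero => simp
  | add y y' hy hy' => simp only [add_mul, map_add, hy, hy']
  | single g b =>
    rw [single_mul_single, cosetProj_single, cosetProj_single, hx]
    split_ifs <;> simp

theorem cosetProj_mapDomainRingHom_mul (q : Quotient (QuotientGroup.rightRel H))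
    (b : MonoidAlgebra k H) (y : MonoidAlgebra k G) :
    cosetProj H q (mapDomainRingHom k H.subtype b * y)
      = mapDomainRingHom k H.subtype b * cosetProj H q y := by
  induction b using induction_linear with
  | zero => simp
  | add b b' hb hb' => simp only [map_add, add_mul, hb, hb']
  | single h a =>
    rw [mapDomainRingHom_apply, mapDomain_single]
    refine cosetProj_single_mul (fun g => Quotient.sound ?_) a y
    simp [QuotientGroup.rightRel_apply]

theorem cosetProj_mul_mapDomainRingHom (hK : Subgroup.normalClosure (K : Set G) ≤ H)
    (q : Quotient (QuotientGroup.rightRel H))    (y : MonoidAlgebra k G) (c : MonoidAlgebra k K) :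
    cosetProj H q (y * mapDomainRingHom k K.subtype c)
      = cosetProj H q y * mapDomainRingHom k K.subtype c := by
  induction c using induction_linear with
  | zero => simp
  | add c c' hc hc' => simp only [map_add, mul_add, hc, hc']
  | single κ a =>
    rw [mapDomainRingHom_apply, mapDomain_single]
    refine cosetProj_mul_single (fun g => Quotient.sound ?_) y a
    simpa [QuotientGroup.rightRel_apply, mul_assoc] using
      conj_mem_of_normalClosure_le hK g (inv_mem κ.2)

theorem sum_cosetProj [Fintype (Quotient (QuotientGroup.rightRel H))] (y : MonoidAlgebra k G) :
    ∑ q, cosetProj H q y = y := by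
  induction y using induction_linear with
  | zero => simp
  | add y y' hy hy' => simp only [map_add, Finset.sum_add_distrib, hy, hy']
  | single g a => simp [cosetProj_single]

theorem exists_cosetProj_eq_mul_of (q : Quotient (QuotientGroup.rightRel H))
    (y : MonoidAlgebra k G) :
    ∃ b, cosetProj H q y = mapDomainRingHom k H.subtype b * of k G q.out := by
  induction y using induction_linear with
  | zero => exact ⟨0, by simp⟩
  | add y y' hy hy' =>
    obtain ⟨b, hb⟩ := hy
    obtain ⟨b', hb'⟩ := hy'
    exact ⟨b + b', by rw [map_add, hb, hb', map_add, add_mul]⟩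
  | single g a =>
    rw [cosetProj_single]
    split_ifs with h
    · have hg : g * q.out⁻¹ ∈ H :=
        QuotientGroup.rightRel_apply.mp (Quotient.exact (q.out_eq.trans h.symm))
      exact ⟨single ⟨g * q.out⁻¹, hg⟩ a, by simp [of_apply, single_mul_single]⟩
    · exact ⟨0, by simp⟩

end GroupAlgebra

open MonoidAlgebra in
theorem groupAlgebra_tower_rightD3_general (k : Type) [CommRing k] (G : Type) [Group G]
    [Finite G] (H K : Subgroup G)
    (hncl : Subgroup.normalClosure (K : Set G) ≤ H) :
    BSim (MonoidAlgebra k G) (MonoidAlgebra k ↥K)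
      (fun a x => a * x)
      (fun x c => x * MonoidAlgebra.mapDomainRingHom k K.subtype c)
      (fun a t => tL (MonoidAlgebra.mapDomainRingHom k H.subtype) a t)
      (fun t c => tR (MonoidAlgebra.mapDomainRingHom k H.subtype)
        (MonoidAlgebra.mapDomainRingHom k K.subtype c) t) := by
  have : Fintype (Quotient (QuotientGroup.rightRel H)) := Fintype.ofFinite _
  refine ⟨bDiv_self_tensorSq _ _
    (exists_mapDomainRingHom_subtype_eq (Subgroup.le_normalClosure.trans hncl)), ?_⟩
  refine bDiv_tensorSq_pi _ _ (fun q => Units.map (of k G) (toUnits q.out)) (cosetProj H)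
    cosetProj_mapDomainRingHom_mul (cosetProj_mul_mapDomainRingHom hncl) sum_cosetProj
    (fun q y => ?_) (fun q c => ?_)
  · simpa using exists_cosetProj_eq_mul_of q y
  · simpa using exists_of_mul_eq_mul_of hncl q.out c

open MonoidAlgebra in
/-- Let `K ≤ H ≤ G` be finite groups with the normal closure of `K` in `G` contained in
`H`, and let `A = k[G]`, `B = k[H]`, `C = k[K]` be the group algebras over a commutative
ring `k`. Then the tower `A/B/C` is right depth three: `A ⊗_B A ∼ A` as
`(A,C)`-bimodules (the right `C`-action being via `k[K] → k[G]`). -/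
theorem groupAlgebra_tower_rightD3 (k : Type) [CommRing k] (G : Type) [Group G]
    [Finite G] (H K : Subgroup G) (hKH : K ≤ H)
    (hncl : Subgroup.normalClosure (K : Set G) ≤ H) :
    BSim (MonoidAlgebra k G) (MonoidAlgebra k ↥K)
      (fun a x => a * x)
      (fun x c => x * MonoidAlgebra.mapDomainRingHom k K.subtype c)
      (fun a t => tL (MonoidAlgebra.mapDomainRingHom k H.subtype) a t)
      (fun t c => tR (MonoidAlgebra.mapDomainRingHom k H.subtype)
        (MonoidAlgebra.mapDomainRingHom k K.subtype c) t) :=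
  groupAlgebra_tower_rightD3_general k G H K hncl
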